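/- Let R be an integral domain and let ∂ : G₋₁ → G₀ be an R-linear map of finitely generated projective R-modules such that im ∂ is projective and coker ∂ is a torsion R-module. Write K = ker ∂, M^∨ = Hom_R(M, R), and let φ : coker(∂^∨) → K^∨ be the surjection induced by restriction of functionals (where ∂^∨ : G₀^∨ → G₋₁^∨ is precomposition with ∂). Then the dual map φ^∨ : Hom_R(K^∨, R) → Hom_R(coker(∂^∨), R) is an isomorphism of R-modules. -/

import Mathlib

/-- Over an integral domain, for `f : G₁ → G₀` between finitely generated projective
modules with `im f` projective and `coker f` torsion, the dual of the induced surjection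
`φ : coker (f^∨) → (ker f)^∨` is an isomorphism. -/
theorem stmt_3 {R : Type*} [CommRing R] [IsDomain R]
    {G₁ G₀ : Type*} [AddCommGroup G₁] [Module R G₁] [AddCommGroup G₀] [Module R G₀]
    [Module.Finite R G₁] [Module.Projective R G₁]
    [Module.Finite R G₀] [Module.Projective R G₀]
    (f : G₁ →ₗ[R] G₀) (hI : Module.Projective R ↥(LinearMap.range f))
    (htor : Module.IsTorsion R (G₀ ⧸ LinearMap.range f)) :
    ∀ h : LinearMap.range (LinearMap.lcomp R R f) ≤
        LinearMap.ker (LinearMap.lcomp R R (LinearMap.ker f).subtype),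
      Function.Bijective
        (LinearMap.lcomp R R
          (Submodule.liftQ (LinearMap.range (LinearMap.lcomp R R f))
            (LinearMap.lcomp R R (LinearMap.ker f).subtype) h)) := by
  intro h
  set K := LinearMap.ker f
  set N := LinearMap.range (LinearMap.lcomp R R f)
  set Kd := LinearMap.lcomp R R K.subtype
  set φ := Submodule.liftQ N Kd h with hφ
  -- splitting of `G₁ → range f` using projectivity of the range
  obtain ⟨s, hs⟩ := Module.projective_lifting_property f.rangeRestrict LinearMap.id
    f.surjective_rangeRestrict
  -- projection `p : G₁ → K` which is the identity on `K`
  have hker : ∀ x : G₁, x - s (f.rangeRestrict x) ∈ K := by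
    intro x
    have : f (s (f.rangeRestrict x)) = f x := by
      have h2 : f.rangeRestrict (s (f.rangeRestrict x)) = f.rangeRestrict x := by
        have := LinearMap.congr_fun hs (f.rangeRestrict x)
        exact this
      have := congrArg Subtype.val h2
      simpa using this
    simp [K, LinearMap.mem_ker, map_sub, this]
  let p : G₁ →ₗ[R] ↥K :=
    LinearMap.codRestrict K (LinearMap.id - s ∘ₗ f.rangeRestrict) (by
      intro x; simpa using hker x)
  have hpk : ∀ k : ↥K, p (k : G₁) = k := by
    intro k
    apply Subtype.ext
    have hk0 : f.rangeRestrict (k : G₁) = 0 := by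
      apply Subtype.ext
      simpa using k.2
    simp [p, hk0]
  -- `Kd` is surjective, hence so is `φ`
  have hKd : Function.Surjective Kd := by
    intro lam
    refine ⟨lam ∘ₗ p, ?_⟩
    ext k
    simp [Kd, hpk k]
  have hφs : Function.Surjective φ := by
    intro lam
    obtain ⟨g, hg⟩ := hKd lam
    exact ⟨N.mkQ g, by simpa [φ] using hg⟩
  constructor
  · -- injectivity: dual of a surjection is injective
    intro a b hab
    ext x
    obtain ⟨y, rfl⟩ := hφs x
    have := LinearMap.congr_fun hab y
    simpa using this
  · -- surjectivity
    intro ψ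
    -- `ψ ∘ mkQ` is an element of the double dual of `G₁`
    obtain ⟨x, hx⟩ := (Module.bijective_dual_eval R G₁).2 (ψ ∘ₗ N.mkQ)
    have hxK : x ∈ K := by
      have h0 : ∀ g : Module.Dual R G₀, g (f x) = 0 := by
        intro g
        have hmem : LinearMap.lcomp R R f g ∈ N := ⟨g, rfl⟩
        have : (ψ ∘ₗ N.mkQ) (LinearMap.lcomp R R f g) = 0 := by
          simp [(Submodule.Quotient.mk_eq_zero N).2 hmem, Submodule.mkQ_apply]
        rw [← hx] at this
        simpa using this
      have : Module.Dual.eval R G₀ (f x) = 0 := by ext g; simpa using h0 g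
      have h3 : Module.Dual.eval R G₀ (f x) = Module.Dual.eval R G₀ 0 := by
        rw [this, map_zero]
      have := (Module.bijective_dual_eval R G₀).1 h3
      simpa [K, LinearMap.mem_ker] using this
    refine ⟨Module.Dual.eval R ↥K ⟨x, hxK⟩, ?_⟩
    apply Submodule.linearMap_qext
    ext lam
    have hlam : (ψ ∘ₗ N.mkQ) lam = lam x := by rw [← hx]; rfl
    simp [φ, Kd, hlam]
    exact hlam.symm
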